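/- If X is a connected n-vertex graph of treewidth k, then a permutation α of V(X) is an automorphism of X if and only if there exists an annotated width-k tree decomposition t̂ of X whose annotation morphism equals α. -/
import Mathlib


/-- `α` is an automorphism of the graph `X`. -/
def IsAut {V : Type*} (X : SimpleGraph V) (α : Equiv.Perm V) : Prop :=
  ∀ i j, X.Adj i j ↔ X.Adj (α i) (α j)

/-- The closed neighborhood `N̄(S)` of a finite set of vertices `S` (as a set). -/
def NbarS {V : Type*} (X : SimpleGraph V) (S : Finset V) : Set V :=
  ↑S ∪ ⋃ x ∈ S, X.neighborSet x

/-- A width-`k` tree decomposition of `X`: a finite tree whose nodes are labeled with bags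
of size at most `k+1`, such that every vertex and every edge is covered by some bag, and
for every vertex the set of nodes whose bag contains it induces a connected subtree. -/
structure TreeDecomp {V : Type*} (X : SimpleGraph V) (k : ℕ) where
  T : Type
  [fintypeT : Fintype T]
  tg : SimpleGraph T
  isTree : tg.IsTree
  bag : T → Finset V
  width : ∀ t, (bag t).card ≤ k + 1
  cover : ∀ v : V, ∃ t, v ∈ bag t
  edgeCover : ∀ v w : V, X.Adj v w → ∃ t, v ∈ bag t ∧ w ∈ bag t
  subtree : ∀ v : V, (tg.induce {t | v ∈ bag t}).Connected

/-- An annotated width-`k` tree decomposition: each node `t` carries a partial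
automorphism `ann t` of `X`, meaningful on the closed neighborhood `N̄(bag t)`; it is
injective there, maps `N̄(bag t)` onto `N̄(ann t (bag t))`, preserves and reflects
adjacency there, and annotations of adjacent nodes agree on the intersection of the
closed neighborhoods of their bags. -/
structure AnnTreeDecomp {V : Type*} [DecidableEq V] (X : SimpleGraph V) (k : ℕ) extends
    TreeDecomp X k where
  ann : T → (V → V)
  annInj : ∀ t, Set.InjOn (ann t) (NbarS X (bag t))
  annImage : ∀ t, ann t '' NbarS X (bag t) = NbarS X ((bag t).image (ann t))
  annIso : ∀ t, ∀ x ∈ NbarS X (bag t), ∀ y ∈ NbarS X (bag t),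
    (X.Adj x y ↔ X.Adj (ann t x) (ann t y))
  annConsistent : ∀ t₁ t₂, tg.Adj t₁ t₂ →
    Set.EqOn (ann t₁) (ann t₂) (NbarS X (bag t₁) ∩ NbarS X (bag t₂))


lemma aut_of_mono {V : Type*} [Fintype V] (X : SimpleGraph V) (α : Equiv.Perm V)
    (h : ∀ i j, X.Adj i j → X.Adj (α i) (α j)) :
    ∀ i j, X.Adj (α i) (α j) → X.Adj i j := by
  classical
  intro i j hij
  have ginj : Function.Injective (Sym2.map α) := Sym2.map.injective α.injective
  have hmaps : Finset.image (Sym2.map α) X.edgeFinset ⊆ X.edgeFinset := by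
    intro e he
    simp only [Finset.mem_image] at he
    obtain ⟨e, he, rfl⟩ := he
    induction e using Sym2.ind with
    | _ a b =>
      rw [SimpleGraph.mem_edgeFinset, Sym2.map_pair_eq, SimpleGraph.mem_edgeSet]
      exact h a b (by simpa using he)
  have him : Finset.image (Sym2.map α) X.edgeFinset = X.edgeFinset := by
    apply Finset.eq_of_subset_of_card_le hmaps
    rw [Finset.card_image_of_injective _ ginj]
  have : s(α i, α j) ∈ X.edgeFinset := by simpa using hij
  rw [← him, Finset.mem_image] at this
  obtain ⟨e, he, heq⟩ := this
  have : e = s(i, j) := ginj (by simpa using heq)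
  subst this
  simpa using he

lemma aut_nbhd {V : Type*} (X : SimpleGraph V) (α : Equiv.Perm V) (hα : IsAut X α) (x : V) :
    α '' X.neighborSet x = X.neighborSet (α x) := by
  ext y
  constructor
  · rintro ⟨z, hz, rfl⟩
    exact (hα x z).1 hz
  · intro hy
    refine ⟨α.symm y, ?_, α.apply_symm_apply y⟩
    have := (hα x (α.symm y)).2
    simp only [α.apply_symm_apply] at this
    exact this hy

lemma aut_nbar {V : Type*} [DecidableEq V] (X : SimpleGraph V) (α : Equiv.Perm V)
    (hα : IsAut X α) (S : Finset V) :
    α '' NbarS X S = NbarS X (S.image α) := by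
  unfold NbarS
  rw [Set.image_union, Set.image_iUnion₂, Finset.coe_image]
  congr 1
  rw [Finset.set_biUnion_finset_image]
  exact Set.iUnion₂_congr fun x hx => aut_nbhd X α hα x

/-- for a connected `n`-vertex graph `X` of treewidth `k`, a permutation `α`
of `V(X)` is an automorphism of `X` iff there is an annotated width-`k` tree decomposition
of `X` whose annotation morphism equals `α`. -/
theorem stmt_12 (n k : ℕ) (X : SimpleGraph (Fin n)) (hconn : X.Connected)
    (htw : Nonempty (TreeDecomp X k)) (α : Equiv.Perm (Fin n)) :
    IsAut X α ↔ ∃ d : AnnTreeDecomp X k,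
      ∀ t, Set.EqOn (d.ann t) α (NbarS X (d.bag t)) := by
  constructor
  · intro hα
    obtain ⟨d0⟩ := htw
    have himg : ∀ t, (fun x => α x) '' NbarS X (d0.bag t)
        = NbarS X ((d0.bag t).image (fun x => α x)) := by
      intro t
      have : (d0.bag t).image (fun x => α x) = (d0.bag t).image (⇑α) := rfl
      rw [this]
      exact aut_nbar X α hα (d0.bag t)
    refine ⟨{ toTreeDecomp := d0
              ann := fun _ => α
              annInj := fun t => α.injective.injOn
              annImage := himg
              annIso := fun t x _ y _ => hα x y
              annConsistent := fun t₁ t₂ _ => fun x _ => rfl },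
      fun t => fun x _ => rfl⟩
  · rintro ⟨d, hd⟩
    have hmono : ∀ i j, X.Adj i j → X.Adj (α i) (α j) := by
      intro i j hij
      obtain ⟨t, hi, hj⟩ := d.edgeCover i j hij
      have hi' : i ∈ NbarS X (d.bag t) := Or.inl hi
      have hj' : j ∈ NbarS X (d.bag t) := Or.inl hj
      have := (d.annIso t i hi' j hj').1 hij
      rwa [hd t hi', hd t hj'] at this
    exact fun i j => ⟨hmono i j, aut_of_mono X α hmono i j⟩
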